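/- arXiv:2404.05166 — 2 statements merged into one kernel-verified Lean document; each statement's English description precedes it below -/
import Mathlib

section
/- Let T > 0, let A, B, C, D, Q, R, Γ : ℝ → ℝ be continuous on [0,T], let H, Γ₀ ∈ ℝ, and fix ε > 0, M ≥ 0. Suppose P : ℝ → ℝ is differentiable on [0,T], satisfies P(T) = H, |R(t) + P(t)D(t)²| ≥ ε on [0,T] and P'(t) + 2A(t)P(t) + C(t)²P(t) − (R(t) + P(t)D(t)²)⁻¹·(B(t)P(t) + P(t)C(t)D(t))² + Q(t) = 0 on [0,T]. Then there exists a constant c ≥ 0 such that for every natural number N ≥ 1 and every pair of functions P_N, K_N : ℝ → ℝ differentiable on [0,T] with P_N(T) = H·(1 − Γ₀/N), |P_N(t)| ≤ M, |K_N(t)| ≤ M, |α_N(t)| ≥ ε on [0,T], where α_N := R + (P_N + K_N/N)D² and β_N := B·P_N + (P_N + K_N/N)·C·D, satisfying P_N'(t) + 2A(t)P_N(t) − P_N(t)B(t)α_N(t)⁻¹β_N(t) + C(t)(P_N(t) + K_N(t)/N)(C(t) − D(t)α_N(t)⁻¹β_N(t)) + (1 − Γ(t)/N)Q(t) = 0 on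 [0,T], one has sup_{t ∈ [0,T]} |P_N(t) − P(t)| ≤ c/N. -/
/-
Writing `u = K_N/N`, the `N`-player vector field is the limiting Riccati vector field with `p`
replaced by `p + u` inside `α` and `β`, plus the forcing `C²u − (Γ/N)Q`. On the region where
`|α|, |α_N| ≥ ε` and all data are bounded, the limiting vector field is Lipschitz in `(p, u)`, so
`e = P_N − P` satisfies `|e'| ≤ L|e| + c₁/N` on `[0,T]` with `|e(T)| = |HΓ₀|/N`. Grönwall's
inequality, run backward from `T`, gives `|e| ≤ c/N`.
-/

open Set Real

theorem norm_le_gronwallBound_backward {E : Type*} [NormedAddCommGroup E] [NormedSpace ℝ E]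
    {f f' : ℝ → E} {δ K ε a b : ℝ} (hf : ∀ t ∈ Icc a b, HasDerivAt f (f' t) t)
    (hb : ‖f b‖ ≤ δ) (bound : ∀ t ∈ Icc a b, ‖f' t‖ ≤ K * ‖f t‖ + ε) :
    ∀ t ∈ Icc a b, ‖f t‖ ≤ gronwallBound δ K ε (b - t) := by
  have hneg : ∀ s ∈ Icc (-b) (-a), -s ∈ Icc a b := fun s hs =>
    ⟨le_neg_of_le_neg hs.2, neg_le_of_neg_le hs.1⟩
  have hderiv : ∀ s ∈ Icc (-b) (-a), HasDerivAt (fun s => f (-s)) (-f' (-s)) s := fun s hs => by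
    simpa [Function.comp_def] using (hf _ (hneg s hs)).scomp s (hasDerivAt_neg s)
  intro t ht
  have := norm_le_gronwallBound_of_norm_deriv_right_le
    (fun s hs => (hderiv s hs).continuousAt.continuousWithinAt)
    (fun s hs => (hderiv s (Ico_subset_Icc_self hs)).hasDerivWithinAt)
    (by simpa using hb) (fun s hs => by simpa using bound _ (hneg s (Ico_subset_Icc_self hs)))
    (-t) ⟨neg_le_neg ht.2, neg_le_neg ht.1⟩
  simpa [sub_eq_add_neg, add_comm] using this

theorem gronwallBound_le_mul_exp {δ K ε x : ℝ} (hK : 0 < K) (hε : 0 ≤ ε) :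
    gronwallBound δ K ε x ≤ (δ + ε / K) * exp (K * x) := by
  rw [gronwallBound_of_K_ne_0 hK.ne']
  calc δ * exp (K * x) + ε / K * (exp (K * x) - 1) = (δ + ε / K) * exp (K * x) - ε / K := by ring
    _ ≤ (δ + ε / K) * exp (K * x) := sub_le_self _ (div_nonneg hε hK.le)

theorem IsCompact.exists_bound_of_forall_continuousOn {X ι E : Type*} [TopologicalSpace X]
    [Fintype ι] [NormedAddCommGroup E] {s : Set X} (hs : IsCompact s) {f : ι → X → E}
    (hf : ∀ i, ContinuousOn (f i) s) : ∃ K, ∀ i, ∀ x ∈ s, ‖f i x‖ ≤ K := by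
  obtain ⟨K, hK⟩ := hs.exists_bound_of_continuousOn (continuousOn_pi.2 hf)
  exact ⟨K, fun i x hx => (norm_le_pi_norm (fun j => f j x) i).trans (hK x hx)⟩

theorem norm_inv_mul_sq_sub_inv_mul_sq_le {𝕜 : Type*} [NormedField 𝕜] {α α' β β' : 𝕜}
    {ε K : ℝ} (hε : 0 < ε) (hα : ε ≤ ‖α‖) (hα' : ε ≤ ‖α'‖) (hβ : ‖β‖ ≤ K) (hβ' : ‖β'‖ ≤ K) :
    ‖α'⁻¹ * β' ^ 2 - α⁻¹ * β ^ 2‖ ≤ 2 * K / ε * ‖β' - β‖ + (K / ε) ^ 2 * ‖α' - α‖ := by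
  have hα0 : α ≠ 0 := norm_pos_iff.mp (hε.trans_le hα)
  have hα'0 : α' ≠ 0 := norm_pos_iff.mp (hε.trans_le hα')
  have hinv : ‖α⁻¹‖ ≤ ε⁻¹ := by rw [norm_inv]; exact inv_anti₀ hε hα
  have hinv' : ‖α'⁻¹‖ ≤ ε⁻¹ := by rw [norm_inv]; exact inv_anti₀ hε hα'
  have hsplit : α'⁻¹ * β' ^ 2 - α⁻¹ * β ^ 2
      = α'⁻¹ * (β' + β) * (β' - β) - α'⁻¹ * α⁻¹ * β ^ 2 * (α' - α) := by
    field_simp; ring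
  calc ‖α'⁻¹ * β' ^ 2 - α⁻¹ * β ^ 2‖
      ≤ ‖α'⁻¹‖ * (‖β'‖ + ‖β‖) * ‖β' - β‖ + ‖α'⁻¹‖ * ‖α⁻¹‖ * ‖β‖ ^ 2 * ‖α' - α‖ := by
        rw [hsplit]
        refine (norm_sub_le _ _).trans (add_le_add ?_ (by simp only [norm_mul, norm_pow, le_refl]))
        rw [norm_mul, norm_mul]
        gcongr
        exact norm_add_le _ _
    _ ≤ ε⁻¹ * (K + K) * ‖β' - β‖ + ε⁻¹ * ε⁻¹ * K ^ 2 * ‖α' - α‖ := by gcongr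
    _ = 2 * K / ε * ‖β' - β‖ + (K / ε) ^ 2 * ‖α' - α‖ := by ring

/-- `riccatiDrift a b c d q r p 0` is the right-hand side of the limiting Riccati equation; with
`u = K_N/N`, `riccatiDrift a b c d q r P_N u` is the `N`-player one up to an `O(1/N)` forcing. -/
noncomputable def riccatiDrift (a b c d q r p u : ℝ) : ℝ :=
  2 * a * p + c ^ 2 * p - (r + (p + u) * d ^ 2)⁻¹ * (b * p + (p + u) * c * d) ^ 2 + q

noncomputable def riccatiLipConst (K ε : ℝ) : ℝ := 3 * K ^ 2 + 12 * K ^ 5 / ε + 9 * K ^ 8 / ε ^ 2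

theorem riccatiLipConst_pos {K ε : ℝ} (hK : 0 < K) (hε : 0 < ε) : 0 < riccatiLipConst K ε := by
  unfold riccatiLipConst; positivity

theorem abs_riccatiDrift_sub_le {K ε a b c d q r p p' u : ℝ} (hK : 1 ≤ K) (hε : 0 < ε)
    (ha : |a| ≤ K) (hb : |b| ≤ K) (hc : |c| ≤ K) (hd : |d| ≤ K)
    (hp : |p| ≤ K) (hp' : |p'| ≤ K) (hu : |u| ≤ K)
    (hα : ε ≤ |r + p * d ^ 2|) (hα' : ε ≤ |r + (p' + u) * d ^ 2|) :
    |riccatiDrift a b c d q r p' u - riccatiDrift a b c d q r p 0|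
      ≤ riccatiLipConst K ε * (|p' - p| + |u|) := by
  have hK23 : K ^ 2 ≤ K ^ 3 := pow_le_pow_right₀ hK (by norm_num)
  set s := |p' - p| + |u|
  have hs : |p' + u - p| ≤ s := by simpa only [add_sub_right_comm] using abs_add_le (p' - p) u
  have hβ : |b * p + p * c * d| ≤ 3 * K ^ 3 := by
    calc |b * p + p * c * d| ≤ |b| * |p| + |p| * |c| * |d| := by
          simpa only [abs_mul] using abs_add_le (b * p) (p * c * d)
      _ ≤ K * K + K * K * K := by gcongr
      _ ≤ 3 * K ^ 3 := by nlinarith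
  have hβ' : |b * p' + (p' + u) * c * d| ≤ 3 * K ^ 3 := by
    have hpu : |p' + u| ≤ 2 * K := by linarith [abs_add_le p' u]
    calc |b * p' + (p' + u) * c * d| ≤ |b| * |p'| + |p' + u| * |c| * |d| := by
          simpa only [abs_mul] using abs_add_le (b * p') ((p' + u) * c * d)
      _ ≤ K * K + 2 * K * K * K := by gcongr
      _ ≤ 3 * K ^ 3 := by nlinarith
  have hΔβ : |(b * p' + (p' + u) * c * d) - (b * p + p * c * d)| ≤ 2 * K ^ 2 * s := by
    calc |(b * p' + (p' + u) * c * d) - (b * p + p * c * d)|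
        = |b * (p' - p) + (p' + u - p) * c * d| := by ring_nf
      _ ≤ |b| * |p' - p| + |p' + u - p| * |c| * |d| := by
          simpa only [abs_mul] using abs_add_le (b * (p' - p)) ((p' + u - p) * c * d)
      _ ≤ K * s + s * K * K := by gcongr; exact le_add_of_nonneg_right (abs_nonneg u)
      _ ≤ 2 * K ^ 2 * s := by nlinarith [abs_nonneg (p' - p), abs_nonneg u]
  have hΔα : |(r + (p' + u) * d ^ 2) - (r + p * d ^ 2)| ≤ K ^ 2 * s := by
    calc |(r + (p' + u) * d ^ 2) - (r + p * d ^ 2)| = |p' + u - p| * |d| ^ 2 := by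
          rw [← abs_pow, ← abs_mul]; ring_nf
      _ ≤ s * K ^ 2 := by gcongr
      _ = K ^ 2 * s := mul_comm _ _
  have hlin : |2 * a * (p' - p) + c ^ 2 * (p' - p)| ≤ 3 * K ^ 2 * s := by
    calc |2 * a * (p' - p) + c ^ 2 * (p' - p)| ≤ |2 * a * (p' - p)| + |c ^ 2 * (p' - p)| :=
          abs_add_le _ _
      _ = (2 * |a| + |c| ^ 2) * |p' - p| := by
          rw [abs_mul, abs_mul, abs_mul, abs_two, abs_pow]; ring
      _ ≤ (2 * K + K ^ 2) * s := by gcongr; exact le_add_of_nonneg_right (abs_nonneg u)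
      _ ≤ 3 * K ^ 2 * s := by gcongr; nlinarith
  have hquot := norm_inv_mul_sq_sub_inv_mul_sq_le (𝕜 := ℝ) hε hα hα' hβ hβ'
  simp only [Real.norm_eq_abs] at hquot
  calc |riccatiDrift a b c d q r p' u - riccatiDrift a b c d q r p 0|
      = |(2 * a * (p' - p) + c ^ 2 * (p' - p))
          - ((r + (p' + u) * d ^ 2)⁻¹ * (b * p' + (p' + u) * c * d) ^ 2
            - (r + p * d ^ 2)⁻¹ * (b * p + p * c * d) ^ 2)| := by
        unfold riccatiDrift; ring_nf
    _ ≤ 3 * K ^ 2 * s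
          + (2 * (3 * K ^ 3) / ε * (2 * K ^ 2 * s) + (3 * K ^ 3 / ε) ^ 2 * (K ^ 2 * s)) :=
        (abs_sub _ _).trans (add_le_add hlin (hquot.trans (by gcongr)))
    _ = riccatiLipConst K ε * s := by unfold riccatiLipConst; ring

theorem abs_nPlayerDrift_sub_riccatiDrift_le {K ε n a b c d q r γ p pn k : ℝ} (hK : 1 ≤ K)
    (hε : 0 < ε) (hn : 1 ≤ n) (ha : |a| ≤ K) (hb : |b| ≤ K) (hc : |c| ≤ K) (hd : |d| ≤ K)
    (hq : |q| ≤ K) (hγ : |γ| ≤ K) (hp : |p| ≤ K) (hpn : |pn| ≤ K) (hk : |k| ≤ K)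
    (hα : ε ≤ |r + p * d ^ 2|) (hαN : ε ≤ |r + (pn + k / n) * d ^ 2|) :
    |(2 * a * pn - pn * b * (r + (pn + k / n) * d ^ 2)⁻¹ * (b * pn + (pn + k / n) * c * d)
        + c * (pn + k / n)
            * (c - d * (r + (pn + k / n) * d ^ 2)⁻¹ * (b * pn + (pn + k / n) * c * d))
        + (1 - γ / n) * q) - riccatiDrift a b c d q r p 0|
      ≤ riccatiLipConst K ε * |pn - p| + (riccatiLipConst K ε * K + K ^ 3 + K ^ 2) / n := by
  have hn0 : 0 < n := zero_lt_one.trans_le hn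
  have hdiv : ∀ {x : ℝ}, |x| ≤ K → |x / n| ≤ K / n := fun hx => by
    rw [abs_div, abs_of_pos hn0]; gcongr
  have hu : |k / n| ≤ K := (hdiv hk).trans (div_le_self (zero_le_one.trans hK) hn)
  -- With `u = k / n`, `β_N = b pn + (pn + u) c d`, so the two `α_N⁻¹ β_N` terms make `α_N⁻¹ β_N²`.
  have hsplit : 2 * a * pn - pn * b * (r + (pn + k / n) * d ^ 2)⁻¹ * (b * pn + (pn + k / n) * c * d)
        + c * (pn + k / n)
            * (c - d * (r + (pn + k / n) * d ^ 2)⁻¹ * (b * pn + (pn + k / n) * c * d))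
        + (1 - γ / n) * q
      = riccatiDrift a b c d q r pn (k / n) + (c ^ 2 * (k / n) - γ / n * q) := by
    unfold riccatiDrift; ring
  rw [hsplit, add_sub_right_comm]
  calc |riccatiDrift a b c d q r pn (k / n) - riccatiDrift a b c d q r p 0
          + (c ^ 2 * (k / n) - γ / n * q)|
      ≤ riccatiLipConst K ε * (|pn - p| + |k / n|) + (|c| ^ 2 * |k / n| + |γ / n| * |q|) := by
        refine (abs_add_le _ _).trans (add_le_add ?_ ((abs_sub _ _).trans_eq ?_))
        · exact abs_riccatiDrift_sub_le hK hε ha hb hc hd hp hpn hu hα hαN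
        · rw [abs_mul, abs_mul, abs_pow]
    _ ≤ riccatiLipConst K ε * (|pn - p| + K / n) + (K ^ 2 * (K / n) + K / n * K) := by
        have : 0 ≤ riccatiLipConst K ε := (riccatiLipConst_pos (zero_lt_one.trans_le hK) hε).le
        gcongr
        exacts [hdiv hk, hdiv hk, hdiv hγ]
    _ = riccatiLipConst K ε * |pn - p| + (riccatiLipConst K ε * K + K ^ 3 + K ^ 2) / n := by ring

theorem stmt_10_general (T : ℝ)
    (A B C D Q R Γ : ℝ → ℝ)
    (hA : ContinuousOn A (Icc 0 T)) (hB : ContinuousOn B (Icc 0 T))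
    (hC : ContinuousOn C (Icc 0 T)) (hD : ContinuousOn D (Icc 0 T))
    (hQ : ContinuousOn Q (Icc 0 T))
    (hΓ : ContinuousOn Γ (Icc 0 T))
    (H Γ₀ : ℝ) (ε : ℝ) (hε : 0 < ε) (M : ℝ)
    (P : ℝ → ℝ) (hPT : P T = H)
    (hPα : ∀ t ∈ Icc (0 : ℝ) T, ε ≤ |R t + P t * D t ^ 2|)
    (hPode : ∀ t ∈ Icc (0 : ℝ) T,
      HasDerivAt P
        (-(2 * A t * P t + C t ^ 2 * P t
          - (R t + P t * D t ^ 2)⁻¹ * (B t * P t + P t * C t * D t) ^ 2 + Q t)) t) :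
    ∃ c : ℝ, 0 ≤ c ∧
      ∀ N : ℕ, 1 ≤ N → ∀ PN KN : ℝ → ℝ,
        PN T = H * (1 - Γ₀ / (N : ℝ)) →
        (∀ t ∈ Icc (0 : ℝ) T, |PN t| ≤ M) →
        (∀ t ∈ Icc (0 : ℝ) T, |KN t| ≤ M) →
        (∀ t ∈ Icc (0 : ℝ) T, ε ≤ |R t + (PN t + KN t / (N : ℝ)) * D t ^ 2|) →
        (∀ t ∈ Icc (0 : ℝ) T,
          HasDerivAt PN
            (-(2 * A t * PN t
              - PN t * B t * (R t + (PN t + KN t / (N : ℝ)) * D t ^ 2)⁻¹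
                  * (B t * PN t + (PN t + KN t / (N : ℝ)) * C t * D t)
              + C t * (PN t + KN t / (N : ℝ))
                  * (C t - D t * (R t + (PN t + KN t / (N : ℝ)) * D t ^ 2)⁻¹
                      * (B t * PN t + (PN t + KN t / (N : ℝ)) * C t * D t))
              + (1 - Γ t / (N : ℝ)) * Q t)) t) →
        ∀ t ∈ Icc (0 : ℝ) T, |PN t - P t| ≤ c / N := by
  replace hPode : ∀ t ∈ Icc (0 : ℝ) T,
      HasDerivAt P (-riccatiDrift (A t) (B t) (C t) (D t) (Q t) (R t) (P t) 0) t := by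
    simpa only [riccatiDrift, add_zero] using hPode
  obtain ⟨K₀, hK₀⟩ := isCompact_Icc.exists_bound_of_forall_continuousOn
    (f := ![A, B, C, D, Q, Γ, P]) fun i => by
      fin_cases i <;>
        first | assumption | exact fun t ht => (hPode t ht).continuousAt.continuousWithinAt
  set K := max 1 (max M K₀)
  have hbd : ∀ i, ∀ t ∈ Icc (0 : ℝ) T, |![A, B, C, D, Q, Γ, P] i t| ≤ K := fun i t ht =>
    (hK₀ i t ht).trans ((le_max_right _ _).trans (le_max_right _ _))
  have hMK : M ≤ K := (le_max_left _ _).trans (le_max_right _ _)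
  set L := riccatiLipConst K ε
  have hL : 0 < L := riccatiLipConst_pos (by positivity) hε
  set c₁ := L * K + K ^ 3 + K ^ 2
  refine ⟨(|H * Γ₀| + c₁ / L) * exp (L * T), by positivity, ?_⟩
  intro N hN PN KN hPNT hPNb hKNb hαN hPNode t ht
  have hN1 : (1 : ℝ) ≤ N := Nat.one_le_cast.mpr hN
  have hterm : ‖(PN - P) T‖ ≤ |H * Γ₀| / N := by
    rw [Pi.sub_apply, hPNT, hPT, Real.norm_eq_abs,
      show H * (1 - Γ₀ / N) - H = -(H * Γ₀) / N by ring, abs_div, abs_neg, Nat.abs_cast]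
  have hgron := norm_le_gronwallBound_backward (fun s hs => (hPNode s hs).sub (hPode s hs)) hterm
    (fun s hs => by
      rw [Real.norm_eq_abs, Real.norm_eq_abs, neg_sub_neg, abs_sub_comm]
      exact abs_nPlayerDrift_sub_riccatiDrift_le (le_max_left _ _) hε hN1 (hbd 0 s hs)
        (hbd 1 s hs) (hbd 2 s hs) (hbd 3 s hs) (hbd 4 s hs) (hbd 5 s hs) (hbd 6 s hs)
        ((hPNb s hs).trans hMK) ((hKNb s hs).trans hMK) (hPα s hs) (hαN s hs)) t ht
  calc |PN t - P t| ≤ gronwallBound (|H * Γ₀| / N) L (c₁ / N) (T - t) := hgron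
    _ ≤ gronwallBound (|H * Γ₀| / N) L (c₁ / N) T :=
        gronwallBound_mono (by positivity) (by positivity) hL.le (by linarith [ht.1])
    _ ≤ (|H * Γ₀| / N + c₁ / N / L) * exp (L * T) :=
        gronwallBound_le_mul_exp hL (by positivity)
    _ = (|H * Γ₀| + c₁ / L) * exp (L * T) / N := by ring

/-- Continuous dependence of the Riccati solution on the parameter `1/N`:
the solution `P_N` of the `N`-dependent Riccati equation converges to the solution `P`
of the limiting Riccati equation at rate `1/N` in supremum norm on `[0,T]`. -/
theorem stmt_10 (T : ℝ) (hT : 0 < T)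
    (A B C D Q R Γ : ℝ → ℝ)
    (hA : ContinuousOn A (Icc 0 T)) (hB : ContinuousOn B (Icc 0 T))
    (hC : ContinuousOn C (Icc 0 T)) (hD : ContinuousOn D (Icc 0 T))
    (hQ : ContinuousOn Q (Icc 0 T)) (hR : ContinuousOn R (Icc 0 T))
    (hΓ : ContinuousOn Γ (Icc 0 T))
    (H Γ₀ : ℝ) (ε : ℝ) (hε : 0 < ε) (M : ℝ) (hM : 0 ≤ M)
    (P : ℝ → ℝ) (hPT : P T = H)
    (hPα : ∀ t ∈ Icc (0 : ℝ) T, ε ≤ |R t + P t * D t ^ 2|)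
    (hPode : ∀ t ∈ Icc (0 : ℝ) T,
      HasDerivAt P
        (-(2 * A t * P t + C t ^ 2 * P t
          - (R t + P t * D t ^ 2)⁻¹ * (B t * P t + P t * C t * D t) ^ 2 + Q t)) t) :
    ∃ c : ℝ, 0 ≤ c ∧
      ∀ N : ℕ, 1 ≤ N → ∀ PN KN : ℝ → ℝ,
        PN T = H * (1 - Γ₀ / (N : ℝ)) →
        (∀ t ∈ Icc (0 : ℝ) T, |PN t| ≤ M) →
        (∀ t ∈ Icc (0 : ℝ) T, |KN t| ≤ M) →
        (∀ t ∈ Icc (0 : ℝ) T, ε ≤ |R t + (PN t + KN t / (N : ℝ)) * D t ^ 2|) →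
        (∀ t ∈ Icc (0 : ℝ) T,
          HasDerivAt PN
            (-(2 * A t * PN t
              - PN t * B t * (R t + (PN t + KN t / (N : ℝ)) * D t ^ 2)⁻¹
                  * (B t * PN t + (PN t + KN t / (N : ℝ)) * C t * D t)
              + C t * (PN t + KN t / (N : ℝ))
                  * (C t - D t * (R t + (PN t + KN t / (N : ℝ)) * D t ^ 2)⁻¹
                      * (B t * PN t + (PN t + KN t / (N : ℝ)) * C t * D t))
              + (1 - Γ t / (N : ℝ)) * Q t)) t) →
        ∀ t ∈ Icc (0 : ℝ) T, |PN t - P t| ≤ c / N :=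
  stmt_10_general T A B C D Q R Γ hA hB hC hD hQ hΓ H Γ₀ ε hε M P hPT hPα hPode
end

section
/- Let T > 0, let A, B, C, D, Q, R, Γ : ℝ → ℝ be continuous on [0,T], let H, Γ₀ ∈ ℝ, and fix ε > 0, M ≥ 0, c₀ ≥ 0. Suppose P, K : ℝ → ℝ are differentiable on [0,T] with P(T) = H, K(T) = −H·Γ₀, |P| ≤ M, |K| ≤ M, |α| ≥ ε on [0,T] where α := R + PD², β := BP + PCD, γ := BK, and K satisfies K'(t) + 2A(t)K(t) − K(t)B(t)α(t)⁻¹(β(t) + γ(t)) − β(t)α(t)⁻¹γ(t) − Q(t)Γ(t) = 0 on [0,T]. Then there exists c ≥ 0 such that for every natural number N ≥ 1 and every pair P_N, K_N : ℝ → ℝ differentiable on [0,T] with K_N(T) = −H·(1 − Γ₀/N)·Γ₀, |P_N| ≤ M, |K_N| ≤ M, |α_N| ≥ ε on [0,T] (where α_N := R + (P_N + K_N/N)D², β_N := BP_N + (P_N + K_N/N)CD, γ_N := BK_N), satisfying sup_{t∈[0,T]}|P_N(t) − P(t)| ≤ c₀/N and K_N'(t) + 2A(t)K_N(t) − P_N(t)B(t)α_N(t)⁻¹γ_N(t)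 − K_N(t)B(t)α_N(t)⁻¹(β_N(t) + γ_N(t)) − C(t)D(t)(P_N(t) + K_N(t)/N)α_N(t)⁻¹γ_N(t) − (1 − Γ(t)/N)Q(t)Γ(t) = 0 on [0,T], one has sup_{t ∈ [0,T]} |K_N(t) − K(t)| ≤ c/N. -/
/-!
Both equations have the form `K' = riccatiRHS ν …`, with `ν = 1/N` for `K_N` and `ν = 0`
for `K`. Where the coefficients, `P` and `K` are bounded and `|α| ≥ ε`, the right-hand side
is built from sums, products and inverses of bounded quantities, hence is Lipschitz in
`(ν, P, K)`. So the gap `e = K_N - K` satisfies `|e'| ≤ Λ (|e| + (1 + c₀) / N)` and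
`|e(T)| = |H| Γ₀² / N`, and Grönwall's inequality, run backwards from `T`, gives `|e| ≤ c / N`.
-/

open Set

def BddClose (B L Δ x x' : ℝ) : Prop :=
  |x| ≤ B ∧ |x'| ≤ B ∧ |x - x'| ≤ L * Δ

namespace BddClose

variable {B B₁ B₂ L L₁ L₂ Δ x x' y y' : ℝ}

theorem self (hx : |x| ≤ B) : BddClose B 0 Δ x x :=
  ⟨hx, hx, by simp⟩

theorem neg (h : BddClose B L Δ x x') : BddClose B L Δ (-x) (-x') := by
  refine ⟨by rw [abs_neg]; exact h.1, by rw [abs_neg]; exact h.2.1, ?_⟩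
  rw [← neg_sub', abs_neg]
  exact h.2.2

theorem add (hx : BddClose B₁ L₁ Δ x x') (hy : BddClose B₂ L₂ Δ y y') :
    BddClose (B₁ + B₂) (L₁ + L₂) Δ (x + y) (x' + y') := by
  refine ⟨(abs_add_le _ _).trans (add_le_add hx.1 hy.1),
    (abs_add_le _ _).trans (add_le_add hx.2.1 hy.2.1), ?_⟩
  calc |x + y - (x' + y')| = |(x - x') + (y - y')| := by ring_nf
    _ ≤ |x - x'| + |y - y'| := abs_add_le _ _
    _ ≤ (L₁ + L₂) * Δ := by linarith [hx.2.2, hy.2.2]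

theorem sub (hx : BddClose B₁ L₁ Δ x x') (hy : BddClose B₂ L₂ Δ y y') :
    BddClose (B₁ + B₂) (L₁ + L₂) Δ (x - y) (x' - y') := by
  simpa only [sub_eq_add_neg] using hx.add hy.neg

theorem mul (hx : BddClose B₁ L₁ Δ x x') (hy : BddClose B₂ L₂ Δ y y') :
    BddClose (B₁ * B₂) (B₁ * L₂ + L₁ * B₂) Δ (x * y) (x' * y') := by
  have hB₁ : 0 ≤ B₁ := (abs_nonneg x).trans hx.1
  refine ⟨?_, ?_, ?_⟩
  · rw [abs_mul]; exact mul_le_mul hx.1 hy.1 (abs_nonneg _) hB₁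
  · rw [abs_mul]; exact mul_le_mul hx.2.1 hy.2.1 (abs_nonneg _) hB₁
  calc |x * y - x' * y'| = |x * (y - y') + (x - x') * y'| := by ring_nf
    _ ≤ |x| * |y - y'| + |x - x'| * |y'| := by
      rw [← abs_mul, ← abs_mul]; exact abs_add_le _ _
    _ ≤ B₁ * (L₂ * Δ) + L₁ * Δ * B₂ :=
      add_le_add (mul_le_mul hx.1 hy.2.2 (abs_nonneg _) hB₁)
        (mul_le_mul hx.2.2 hy.2.1 (abs_nonneg _) ((abs_nonneg _).trans hx.2.2))
    _ = (B₁ * L₂ + L₁ * B₂) * Δ := by ring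

theorem inv {ε : ℝ} (hε : 0 < ε) (hx : ε ≤ |x|) (hx' : ε ≤ |x'|)
    (h : BddClose B L Δ x x') :
    BddClose ε⁻¹ (ε⁻¹ * L * ε⁻¹) Δ x⁻¹ x'⁻¹ := by
  have hinv : ∀ {z : ℝ}, ε ≤ |z| → |z⁻¹| ≤ ε⁻¹ := fun hz ↦ by
    rw [abs_inv]; exact inv_anti₀ hε hz
  have hne : ∀ {z : ℝ}, ε ≤ |z| → z ≠ 0 := fun hz ↦ abs_pos.1 (hε.trans_le hz)
  refine ⟨hinv hx, hinv hx', ?_⟩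
  rw [inv_sub_inv' (hne hx) (hne hx'), abs_mul, abs_mul, abs_sub_comm]
  calc |x⁻¹| * |x - x'| * |x'⁻¹| ≤ ε⁻¹ * (L * Δ) * ε⁻¹ :=
        mul_le_mul (mul_le_mul (hinv hx) h.2.2 (abs_nonneg _) (inv_pos.2 hε).le) (hinv hx')
          (abs_nonneg _) (mul_nonneg (inv_pos.2 hε).le ((abs_nonneg _).trans h.2.2))
    _ = ε⁻¹ * L * ε⁻¹ * Δ := by ring

end BddClose

-- `ν` stands for `1/N`; `π`, `α`, `β`, `γ` are the paper's `P_N + K_N/N`, `α_N`, `β_N`,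
-- `γ_N`, and its two terms `P_N B α⁻¹ γ` and `C D π α⁻¹ γ` are combined into `β α⁻¹ γ`.
noncomputable def riccatiRHS (ν a b c d q r g p k : ℝ) : ℝ :=
  let π := p + k * ν
  let α := r + π * d ^ 2
  let β := b * p + π * c * d
  let γ := b * k
  β * α⁻¹ * γ + k * b * α⁻¹ * (β + γ) + (1 - g * ν) * q * g - 2 * a * k

theorem riccatiRHS_zero (a b c d q r g p k : ℝ) :
    riccatiRHS 0 a b c d q r g p k =
      -(2 * a * k - k * b * (r + p * d ^ 2)⁻¹ * ((b * p + p * c * d) + b * k)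
        - (b * p + p * c * d) * (r + p * d ^ 2)⁻¹ * (b * k) - q * g) := by
  simp only [riccatiRHS]; ring

theorem riccatiRHS_inv (n a b c d q r g p k : ℝ) :
    riccatiRHS n⁻¹ a b c d q r g p k =
      -(2 * a * k - p * b * (r + (p + k / n) * d ^ 2)⁻¹ * (b * k)
        - k * b * (r + (p + k / n) * d ^ 2)⁻¹ * ((b * p + (p + k / n) * c * d) + b * k)
        - c * d * (p + k / n) * (r + (p + k / n) * d ^ 2)⁻¹ * (b * k)
        - (1 - g / n) * q * g) := by
  simp only [riccatiRHS]; ring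

theorem exists_abs_riccatiRHS_sub_le (L M : ℝ) {ε : ℝ} (hε : 0 < ε) :
    ∃ Λ, 0 ≤ Λ ∧ ∀ a b c d q r g ν p k ν' p' k' : ℝ,
      |a| ≤ L → |b| ≤ L → |c| ≤ L → |d| ≤ L → |q| ≤ L → |r| ≤ L → |g| ≤ L →
      |ν| ≤ 1 → |ν'| ≤ 1 → |p| ≤ M → |p'| ≤ M → |k| ≤ M → |k'| ≤ M →
      ε ≤ |r + (p + k * ν) * d ^ 2| → ε ≤ |r + (p' + k' * ν') * d ^ 2| →
      |riccatiRHS ν a b c d q r g p k - riccatiRHS ν' a b c d q r g p' k'|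
        ≤ Λ * (|ν - ν'| + |p - p'| + |k - k'|) :=
  -- The hole is filled by unification with the constant that the `BddClose` calculus below
  -- produces; it only involves `L`, `M` and `ε`.
  ⟨max _ 0, le_max_right _ _, fun a b c d q r g ν p k ν' p' k' ha hb hc hd hq hr hg
    hν hν' hp hp' hk hk' hα hα' ↦ by
    set Δ := |ν - ν'| + |p - p'| + |k - k'| with hΔ_def
    have hΔ : 0 ≤ Δ := by positivity
    have cν : BddClose 1 1 Δ ν ν' :=
      ⟨hν, hν', by linarith [hΔ_def, abs_nonneg (p - p'), abs_nonneg (k - k')]⟩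
    have cp : BddClose M 1 Δ p p' :=
      ⟨hp, hp', by linarith [hΔ_def, abs_nonneg (ν - ν'), abs_nonneg (k - k')]⟩
    have ck : BddClose M 1 Δ k k' :=
      ⟨hk, hk', by linarith [hΔ_def, abs_nonneg (ν - ν'), abs_nonneg (p - p')]⟩
    have c1 := BddClose.self (Δ := Δ) (x := 1) le_rfl
    have c2 := BddClose.self (Δ := Δ) (x := 2) le_rfl
    have ca := BddClose.self (Δ := Δ) ha
    have cb := BddClose.self (Δ := Δ) hb
    have cc := BddClose.self (Δ := Δ) hc
    have cd := BddClose.self (Δ := Δ) hd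
    have cq := BddClose.self (Δ := Δ) hq
    have cr := BddClose.self (Δ := Δ) hr
    have cg := BddClose.self (Δ := Δ) hg
    have cπ := cp.add (ck.mul cν)
    have cα := cr.add (cπ.mul (cd.mul cd))
    have cαinv := cα.inv hε (by simpa only [sq] using hα) (by simpa only [sq] using hα')
    have cβ := (cb.mul cp).add ((cπ.mul cc).mul cd)
    have cγ := cb.mul ck
    have cG := ((((cβ.mul cαinv).mul cγ).add (((ck.mul cb).mul cαinv).mul (cβ.add cγ))).add
      (((c1.sub (cg.mul cν)).mul cq).mul cg)).sub ((c2.mul ca).mul ck)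
    simp only [riccatiRHS, sq]
    exact cG.2.2.trans (mul_le_mul_of_nonneg_right (le_max_left _ _) hΔ)⟩

theorem IsCompact.exists_forall_abs_le_of_continuousOn {X ι : Type*} [TopologicalSpace X]
    [Fintype ι] {s : Set X} (hs : IsCompact s) {f : ι → X → ℝ}
    (hf : ∀ i, ContinuousOn (f i) s) : ∃ L, ∀ i, ∀ x ∈ s, |f i x| ≤ L := by
  obtain ⟨L, hL⟩ :=
    hs.exists_bound_of_continuousOn (f := fun x i ↦ f i x) (continuousOn_pi.2 hf)
  exact ⟨L, fun i x hx ↦ (norm_le_pi_norm (fun i ↦ f i x) i).trans (hL x hx)⟩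

section Gronwall

variable {E : Type*} [NormedAddCommGroup E] [NormedSpace ℝ E]

theorem gronwallBound_mul (δ K ε x s : ℝ) :
    gronwallBound (δ * s) K (ε * s) x = gronwallBound δ K ε x * s := by
  unfold gronwallBound
  split_ifs <;> ring

theorem norm_le_gronwallBound_of_norm_deriv_le_of_right {f f' : ℝ → E} {δ K ε a b : ℝ}
    (hf : ∀ x ∈ Icc a b, HasDerivAt f (f' x) x) (hb : ‖f b‖ ≤ δ)
    (bound : ∀ x ∈ Ioc a b, ‖f' x‖ ≤ K * ‖f x‖ + ε) :
    ∀ x ∈ Icc a b, ‖f x‖ ≤ gronwallBound δ K ε (b - x) := by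
  have hmem : ∀ y ∈ Icc a b, a + b - y ∈ Icc a b := fun y hy ↦
    ⟨by linarith [hy.2], by linarith [hy.1]⟩
  have hg : ∀ y ∈ Icc a b, HasDerivAt (fun y ↦ f (a + b - y)) (-f' (a + b - y)) y := by
    intro y hy
    simpa [Function.comp_def] using
      (hf _ (hmem y hy)).scomp y ((hasDerivAt_id y).const_sub (a + b))
  intro x hx
  have h := norm_le_gronwallBound_of_norm_deriv_right_le (f := fun y ↦ f (a + b - y))
    (fun y hy ↦ (hg y hy).continuousAt.continuousWithinAt)
    (fun y hy ↦ (hg y (Ico_subset_Icc_self hy)).hasDerivWithinAt) (by simpa using hb)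
    (fun y hy ↦ by
      simpa only [norm_neg] using bound _ ⟨by linarith [hy.2], by linarith [hy.1]⟩)
    (a + b - x) (hmem x hx)
  rwa [sub_sub_cancel, add_sub_assoc, add_sub_cancel_left] at h

end Gronwall

theorem stmt_11_general (T : ℝ) (hT : 0 < T)
    (A B C D Q R Γ : ℝ → ℝ)
    (hA : ContinuousOn A (Icc 0 T)) (hB : ContinuousOn B (Icc 0 T))
    (hC : ContinuousOn C (Icc 0 T)) (hD : ContinuousOn D (Icc 0 T))
    (hQ : ContinuousOn Q (Icc 0 T)) (hR : ContinuousOn R (Icc 0 T))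
    (hΓ : ContinuousOn Γ (Icc 0 T))
    (H Γ₀ : ℝ) (ε : ℝ) (hε : 0 < ε) (M : ℝ) (c₀ : ℝ) (hc₀ : 0 ≤ c₀)
    (P K : ℝ → ℝ)
    (hKT : K T = -H * Γ₀)
    (hPbd : ∀ t ∈ Icc (0 : ℝ) T, |P t| ≤ M)
    (hKbd : ∀ t ∈ Icc (0 : ℝ) T, |K t| ≤ M)
    (hαbd : ∀ t ∈ Icc (0 : ℝ) T, ε ≤ |R t + P t * D t ^ 2|)
    (hKode : ∀ t ∈ Icc (0 : ℝ) T,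
      HasDerivAt K
        (-(2 * A t * K t
          - K t * B t * (R t + P t * D t ^ 2)⁻¹
              * ((B t * P t + P t * C t * D t) + B t * K t)
          - (B t * P t + P t * C t * D t) * (R t + P t * D t ^ 2)⁻¹ * (B t * K t)
          - Q t * Γ t)) t) :
    ∃ c : ℝ, 0 ≤ c ∧
      ∀ N : ℕ, 1 ≤ N → ∀ PN KN : ℝ → ℝ,
        (∀ t ∈ Icc (0 : ℝ) T, DifferentiableAt ℝ PN t) →
        KN T = -H * (1 - Γ₀ / (N : ℝ)) * Γ₀ →
        (∀ t ∈ Icc (0 : ℝ) T, |PN t| ≤ M) →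
        (∀ t ∈ Icc (0 : ℝ) T, |KN t| ≤ M) →
        (∀ t ∈ Icc (0 : ℝ) T, ε ≤ |R t + (PN t + KN t / (N : ℝ)) * D t ^ 2|) →
        (∀ t ∈ Icc (0 : ℝ) T, |PN t - P t| ≤ c₀ / N) →
        (∀ t ∈ Icc (0 : ℝ) T,
          HasDerivAt KN
            (-(2 * A t * KN t
              - PN t * B t * (R t + (PN t + KN t / (N : ℝ)) * D t ^ 2)⁻¹
                  * (B t * KN t)
              - KN t * B t * (R t + (PN t + KN t / (N : ℝ)) * D t ^ 2)⁻¹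
                  * ((B t * PN t + (PN t + KN t / (N : ℝ)) * C t * D t) + B t * KN t)
              - C t * D t * (PN t + KN t / (N : ℝ))
                  * (R t + (PN t + KN t / (N : ℝ)) * D t ^ 2)⁻¹ * (B t * KN t)
              - (1 - Γ t / (N : ℝ)) * Q t * Γ t)) t) →
        ∀ t ∈ Icc (0 : ℝ) T, |KN t - K t| ≤ c / N := by
  obtain ⟨L, hL⟩ := (isCompact_Icc (a := 0) (b := T)).exists_forall_abs_le_of_continuousOn
    (f := ![A, B, C, D, Q, R, Γ]) (by simp [Fin.forall_fin_succ, *])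
  obtain ⟨Λ, hΛ, hLip⟩ := exists_abs_riccatiRHS_sub_le L M hε
  set g := gronwallBound (|H| * Γ₀ ^ 2) Λ (Λ * (1 + c₀))
  have hg : Monotone g := gronwallBound_mono (by positivity) (by positivity) hΛ
  refine ⟨g T, (by positivity : (0 : ℝ) ≤ |H| * Γ₀ ^ 2).trans
    ((gronwallBound_x0 _ _ _).ge.trans (hg hT.le)), ?_⟩
  rintro N hN PN KN - hKNT hPNbd hKNbd hαNbd hPNP hKNode t ht
  have hNpos : 0 < (N : ℝ)⁻¹ := by positivity
  set e' : ℝ → ℝ := fun x ↦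
    riccatiRHS (N : ℝ)⁻¹ (A x) (B x) (C x) (D x) (Q x) (R x) (Γ x) (PN x) (KN x)
      - riccatiRHS 0 (A x) (B x) (C x) (D x) (Q x) (R x) (Γ x) (P x) (K x)
  have hderiv : ∀ x ∈ Icc 0 T, HasDerivAt (fun x ↦ KN x - K x) (e' x) x := fun x hx ↦ by
    simp only [e', riccatiRHS_inv, riccatiRHS_zero]
    exact (hKNode x hx).sub (hKode x hx)
  have hterminal : ‖KN T - K T‖ ≤ |H| * Γ₀ ^ 2 * (N : ℝ)⁻¹ := by
    rw [hKNT, hKT, Real.norm_eq_abs,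
      show -H * (1 - Γ₀ / N) * Γ₀ - -H * Γ₀ = H * Γ₀ ^ 2 * (N : ℝ)⁻¹ by ring,
      abs_mul, abs_mul, abs_of_pos hNpos, abs_sq]
  have hbound : ∀ x ∈ Ioc 0 T, ‖e' x‖ ≤ Λ * ‖KN x - K x‖ + Λ * (1 + c₀) * (N : ℝ)⁻¹ := by
    intro x hx
    replace hx := Ioc_subset_Icc_self hx
    have h := hLip _ _ _ _ _ _ _ (N : ℝ)⁻¹ (PN x) (KN x) 0 (P x) (K x)
      (hL 0 x hx) (hL 1 x hx) (hL 2 x hx) (hL 3 x hx) (hL 4 x hx) (hL 5 x hx) (hL 6 x hx)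
      (by rw [abs_of_pos hNpos]; exact inv_le_one_of_one_le₀ (by exact_mod_cast hN)) (by simp)
      (hPNbd x hx) (hPbd x hx) (hKNbd x hx) (hKbd x hx)
      (by simpa [div_eq_mul_inv] using hαNbd x hx) (by simpa using hαbd x hx)
    rw [sub_zero, abs_of_pos hNpos] at h
    calc ‖e' x‖ ≤ Λ * ((N : ℝ)⁻¹ + c₀ / N + |KN x - K x|) :=
          h.trans (by gcongr; exact hPNP x hx)
      _ = _ := by rw [Real.norm_eq_abs]; ring
  calc |KN t - K t|
      ≤ gronwallBound (|H| * Γ₀ ^ 2 * (N : ℝ)⁻¹) Λ (Λ * (1 + c₀) * (N : ℝ)⁻¹) (T - t) :=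
        norm_le_gronwallBound_of_norm_deriv_le_of_right hderiv hterminal hbound t ht
    _ = g (T - t) / N := by rw [gronwallBound_mul, div_eq_mul_inv]
    _ ≤ g T / N := by gcongr; exact hg (by linarith [ht.1])

/-- Continuous dependence on the parameter `1/N` for the second Riccati equation:
given that `P_N` is within `c₀/N` of the limiting `P` in supremum norm,
the solution `K_N` of the `N`-dependent Riccati equation is within `O(1/N)` of the
solution `K` of the limiting Riccati equation in supremum norm on `[0,T]`. -/
theorem stmt_11 (T : ℝ) (hT : 0 < T)
    (A B C D Q R Γ : ℝ → ℝ)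
    (hA : ContinuousOn A (Icc 0 T)) (hB : ContinuousOn B (Icc 0 T))
    (hC : ContinuousOn C (Icc 0 T)) (hD : ContinuousOn D (Icc 0 T))
    (hQ : ContinuousOn Q (Icc 0 T)) (hR : ContinuousOn R (Icc 0 T))
    (hΓ : ContinuousOn Γ (Icc 0 T))
    (H Γ₀ : ℝ) (ε : ℝ) (hε : 0 < ε) (M : ℝ) (hM : 0 ≤ M) (c₀ : ℝ) (hc₀ : 0 ≤ c₀)
    (P K : ℝ → ℝ)
    (hPdiff : ∀ t ∈ Icc (0 : ℝ) T, DifferentiableAt ℝ P t)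
    (hPT : P T = H) (hKT : K T = -H * Γ₀)
    (hPbd : ∀ t ∈ Icc (0 : ℝ) T, |P t| ≤ M)
    (hKbd : ∀ t ∈ Icc (0 : ℝ) T, |K t| ≤ M)
    (hαbd : ∀ t ∈ Icc (0 : ℝ) T, ε ≤ |R t + P t * D t ^ 2|)
    (hKode : ∀ t ∈ Icc (0 : ℝ) T,
      HasDerivAt K
        (-(2 * A t * K t
          - K t * B t * (R t + P t * D t ^ 2)⁻¹
              * ((B t * P t + P t * C t * D t) + B t * K t)
          - (B t * P t + P t * C t * D t) * (R t + P t * D t ^ 2)⁻¹ * (B t * K t)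
          - Q t * Γ t)) t) :
    ∃ c : ℝ, 0 ≤ c ∧
      ∀ N : ℕ, 1 ≤ N → ∀ PN KN : ℝ → ℝ,
        (∀ t ∈ Icc (0 : ℝ) T, DifferentiableAt ℝ PN t) →
        KN T = -H * (1 - Γ₀ / (N : ℝ)) * Γ₀ →
        (∀ t ∈ Icc (0 : ℝ) T, |PN t| ≤ M) →
        (∀ t ∈ Icc (0 : ℝ) T, |KN t| ≤ M) →
        (∀ t ∈ Icc (0 : ℝ) T, ε ≤ |R t + (PN t + KN t / (N : ℝ)) * D t ^ 2|) →
        (∀ t ∈ Icc (0 : ℝ) T, |PN t - P t| ≤ c₀ / N) →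
        (∀ t ∈ Icc (0 : ℝ) T,
          HasDerivAt KN
            (-(2 * A t * KN t
              - PN t * B t * (R t + (PN t + KN t / (N : ℝ)) * D t ^ 2)⁻¹
                  * (B t * KN t)
              - KN t * B t * (R t + (PN t + KN t / (N : ℝ)) * D t ^ 2)⁻¹
                  * ((B t * PN t + (PN t + KN t / (N : ℝ)) * C t * D t) + B t * KN t)
              - C t * D t * (PN t + KN t / (N : ℝ))
                  * (R t + (PN t + KN t / (N : ℝ)) * D t ^ 2)⁻¹ * (B t * KN t)
              - (1 - Γ t / (N : ℝ)) * Q t * Γ t)) t) →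
        ∀ t ∈ Icc (0 : ℝ) T, |KN t - K t| ≤ c / N :=
  stmt_11_general T hT A B C D Q R Γ hA hB hC hD hQ hR hΓ H Γ₀ ε hε M c₀ hc₀ P K hKT hPbd hKbd hαbd
    hKode
end
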